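/- arXiv:2409.09217 — 3 statements merged into one kernel-verified Lean document; each statement's English description precedes it below -/
import Mathlib

section
/- Let u : ℝ → ℝ be three times continuously differentiable and let Δx > 0. Define cell averages ū_j = (1/Δx) ∫_{x_i + (j−i−1/2)Δx}^{x_i + (j−i+1/2)Δx} u(x) dx for j = i−1, i, i+1. Then with ideal weights d₀ = 1/3, d₁ = 2/3, the combination d₀·(−ū_{i−1}+3ū_i)/2 + d₁·(ū_i+ū_{i+1})/2 equals u(x_i + Δx/2) + O(Δx³) as Δx → 0. -/
open MeasureTheory intervalIntegral Filter Asymptotics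

/-- Cell average of `u` over a cell of width `Δx` centered at `xc`. -/
noncomputable def cellAvg (u : ℝ → ℝ) (xc Δx : ℝ) : ℝ :=
  (1/Δx) * ∫ x in (xc - Δx/2)..(xc + Δx/2), u x

/-!
The reconstruction is linear in `u` and exact on quadratics: the average of
`a + b (x - xᵢ) + c (x - xᵢ)²` over the cell of width `Δx` centred at `xc` is
`a + b (xc - xᵢ) + c ((xc - xᵢ)² + Δx²/12)`, and the weights `1/3, 2/3` are exactly the ones that
recombine these averages into the value at `xᵢ + Δx/2`. Splitting `u` into its second-order Taylor
polynomial at `xᵢ` and a remainder that is `O((x - xᵢ)³)`, the error becomes a fixed linear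
combination of cell averages and a point value of the remainder, all taken within `O(Δx)` of `xᵢ`,
hence each `O(Δx³)`.
-/

open Set Topology Nat

theorem taylor_isBigO_univ {E : Type*} [NormedAddCommGroup E] [NormedSpace ℝ E] {f : ℝ → E}
    {x₀ : ℝ} {n : ℕ} (hf : ContDiff ℝ (n + 1) f) :
    (fun x ↦ f x - taylorWithinEval f n univ x₀ x) =O[𝓝 x₀] fun x ↦ (x - x₀) ^ (n + 1) := by
  have hnext : (fun x ↦ f x - taylorWithinEval f (n + 1) univ x₀ x) =O[𝓝 x₀]
      fun x ↦ (x - x₀) ^ (n + 1) :=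
    (taylor_isLittleO_univ (mod_cast hf)).isBigO
  have hterm : (fun x ↦ (((n + 1 : ℝ) * n !)⁻¹ * (x - x₀) ^ (n + 1)) •
      iteratedDerivWithin (n + 1) f univ x₀) =O[𝓝 x₀] fun x ↦ (x - x₀) ^ (n + 1) :=
    (((isBigO_refl _ _).const_mul_left _).smul (isBigO_const_const _ one_ne_zero _)).congr_right
      fun x ↦ by simp
  refine (hnext.add hterm).congr_left fun x ↦ ?_
  rw [taylorWithinEval_succ]
  abel

theorem taylorWithinEval_two (f : ℝ → ℝ) (s : Set ℝ) (x₀ x : ℝ) :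
    taylorWithinEval f 2 s x₀ x =
      f x₀ + derivWithin f s x₀ * (x - x₀) + iteratedDerivWithin 2 f s x₀ / 2 * (x - x₀) ^ 2 := by
  simp only [taylorWithinEval_succ, taylor_within_apply, zero_add, Finset.range_one, smul_eq_mul,
    Finset.sum_singleton, factorial_zero, factorial_one, cast_one, CharP.cast_eq_zero, inv_one,
    pow_zero, pow_one, mul_one, one_mul, iteratedDerivWithin_zero, iteratedDerivWithin_one,
    reduceAdd]
  ring

theorem cellAvg_add {f g : ℝ → ℝ} {xc Δx : ℝ}
    (hf : IntervalIntegrable f volume (xc - Δx/2) (xc + Δx/2))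
    (hg : IntervalIntegrable g volume (xc - Δx/2) (xc + Δx/2)) :
    cellAvg (fun x ↦ f x + g x) xc Δx = cellAvg f xc Δx + cellAvg g xc Δx := by
  simp only [cellAvg, integral_add hf hg, mul_add]

theorem cellAvg_quadratic (a b c x₀ xc : ℝ) {Δx : ℝ} (hΔx : Δx ≠ 0) :
    cellAvg (fun x ↦ a + b * (x - x₀) + c * (x - x₀) ^ 2) xc Δx =
      a + b * (xc - x₀) + c * ((xc - x₀) ^ 2 + Δx ^ 2 / 12) := by
  have hprim : ∀ x, HasDerivAt (fun x ↦ a * x + b * (x - x₀) ^ 2 / 2 + c * (x - x₀) ^ 3 / 3)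
      (a + b * (x - x₀) + c * (x - x₀) ^ 2) x := fun x ↦ by
    have hx := (hasDerivAt_id' x).sub_const x₀
    exact (((hasDerivAt_id' x).const_mul a).add ((hx.pow 2).const_mul b |>.div_const 2) |>.add
      ((hx.pow 3).const_mul c |>.div_const 3)).congr_deriv (by push_cast; ring)
  rw [cellAvg, integral_eq_sub_of_hasDerivAt (fun x _ ↦ hprim x)
    (Continuous.intervalIntegrable (by fun_prop) _ _)]
  field_simp
  ring

theorem abs_cellAvg_le {f : ℝ → ℝ} {xc Δx B : ℝ} (hΔx : 0 < Δx)
    (hf : ∀ x ∈ Icc (xc - Δx/2) (xc + Δx/2), |f x| ≤ B) : |cellAvg f xc Δx| ≤ B := by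
  have hint := norm_integral_le_of_norm_le_const (C := B) (f := f) (a := xc - Δx/2)
    (b := xc + Δx/2) fun x hx ↦
      hf x (Ioc_subset_Icc_self (by rwa [uIoc_of_le (by linarith)] at hx))
  rw [Real.norm_eq_abs, show xc + Δx/2 - (xc - Δx/2) = Δx by ring, abs_of_pos hΔx] at hint
  rw [cellAvg, abs_mul, abs_of_pos (by positivity)]
  calc 1 / Δx * |∫ x in (xc - Δx/2)..(xc + Δx/2), f x| ≤ 1 / Δx * (B * Δx) := by gcongr
    _ = B := by field_simp

theorem cellAvg_isBigO_pow {R : ℝ → ℝ} {x₀ : ℝ} {n : ℕ}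
    (hR : R =O[𝓝 x₀] fun x ↦ (x - x₀) ^ n) (k : ℝ) :
    (fun Δx ↦ cellAvg R (x₀ + k * Δx) Δx) =O[𝓝[>] 0] fun Δx ↦ Δx ^ n := by
  obtain ⟨C, hC0, hC⟩ := hR.exists_nonneg
  obtain ⟨ε, hε, hball⟩ := Metric.eventually_nhds_iff.mp hC.bound
  set K := |k| + 1
  have hK : 0 < K := by positivity
  refine IsBigO.of_bound (C * K ^ n) ?_
  filter_upwards [Ioo_mem_nhdsGT (div_pos hε hK)] with Δx ⟨hΔx, hΔxε⟩
  rw [Real.norm_eq_abs, Real.norm_eq_abs, abs_pow, abs_of_pos hΔx, mul_assoc, ← mul_pow]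
  refine abs_cellAvg_le hΔx fun x hx ↦ ?_
  have hdist : |x - x₀| ≤ K * Δx := by
    have hcell : |x - (x₀ + k * Δx)| ≤ Δx / 2 :=
      abs_le.mpr ⟨by linarith [hx.1], by linarith [hx.2]⟩
    calc |x - x₀| = |(x - (x₀ + k * Δx)) + k * Δx| := by ring_nf
      _ ≤ |x - (x₀ + k * Δx)| + |k * Δx| := abs_add_le _ _
      _ ≤ K * Δx := by rw [abs_mul, abs_of_pos hΔx]; linarith
  have hxε : dist x x₀ < ε := by
    rw [Real.dist_eq]
    exact hdist.trans_lt (by rwa [lt_div_iff₀' hK] at hΔxε)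
  calc |R x| ≤ C * |x - x₀| ^ n := by simpa using hball hxε
    _ ≤ C * (K * Δx) ^ n := by gcongr

theorem isBigO_pow_comp_add_mul {R : ℝ → ℝ} {x₀ : ℝ} {n : ℕ}
    (hR : R =O[𝓝 x₀] fun x ↦ (x - x₀) ^ n) (k : ℝ) :
    (fun h ↦ R (x₀ + k * h)) =O[𝓝 0] fun h ↦ h ^ n := by
  have hlim : Tendsto (fun h ↦ x₀ + k * h) (𝓝 0) (𝓝 x₀) := by
    simpa using (tendsto_id.const_mul k).const_add x₀ (x := 𝓝 (0 : ℝ))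
  refine (hR.comp_tendsto hlim).trans (((isBigO_refl _ _).const_mul_left (k ^ n)).congr_left
    fun h ↦ ?_)
  simp [mul_pow]

theorem weno3_ideal_weights_third_order (u : ℝ → ℝ) (hu : ContDiff ℝ 3 u) (xi : ℝ) :
    (fun Δx : ℝ =>
        (1/3) * ((-(cellAvg u (xi - Δx) Δx) + 3 * cellAvg u xi Δx) / 2)
        + (2/3) * ((cellAvg u xi Δx + cellAvg u (xi + Δx) Δx) / 2)
        - u (xi + Δx/2))
      =O[nhdsWithin 0 (Set.Ioi 0)] fun Δx : ℝ => Δx^3 := by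
  obtain ⟨a, b, c, hR⟩ : ∃ a b c : ℝ,
      (fun x ↦ u x - (a + b * (x - xi) + c * (x - xi) ^ 2)) =O[𝓝 xi] fun x ↦ (x - xi) ^ 3 :=
    ⟨_, _, _, (taylor_isBigO_univ (n := 2) hu).congr_left fun x ↦ by rw [taylorWithinEval_two]⟩
  generalize hRdef : (fun x ↦ u x - (a + b * (x - xi) + c * (x - xi) ^ 2)) = R at hR
  have hu_eq : u = fun x ↦ a + b * (x - xi) + c * (x - xi) ^ 2 + R x := by
    subst hRdef; funext x; ring
  have hRc : Continuous R := hRdef ▸ hu.continuous.sub (by fun_prop)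
  have havg (Δx : ℝ) (hΔx : Δx ≠ 0) (xc : ℝ) : cellAvg u xc Δx =
      a + b * (xc - xi) + c * ((xc - xi) ^ 2 + Δx ^ 2 / 12) + cellAvg R xc Δx := by
    rw [← cellAvg_quadratic _ _ _ _ _ hΔx,
      ← cellAvg_add (Continuous.intervalIntegrable (by fun_prop) _ _) (hRc.intervalIntegrable _ _),
      ← hu_eq]
  have hA (k : ℝ) : (fun Δx ↦ cellAvg R (xi + k * Δx) Δx) =O[𝓝[>] 0] fun Δx ↦ Δx ^ 3 :=
    cellAvg_isBigO_pow hR k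
  have hpt : (fun Δx ↦ R (xi + 1 / 2 * Δx)) =O[𝓝[>] 0] fun Δx ↦ Δx ^ 3 :=
    (isBigO_pow_comp_add_mul hR _).mono nhdsWithin_le_nhds
  refine ((((hA (-1)).const_mul_left (-1/6)).add ((hA 0).const_mul_left (5/6))).add
    ((hA 1).const_mul_left (1/3))).sub hpt |>.congr' ?_ EventuallyEq.rfl
  -- the scheme is `-ū_{i-1}/6 + 5ū_i/6 + ū_{i+1}/3`
  filter_upwards [self_mem_nhdsWithin] with Δx (hΔx : 0 < Δx)
  rw [havg Δx hΔx.ne', havg Δx hΔx.ne', havg Δx hΔx.ne', hu_eq]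
  ring_nf
end

section
/- Let u : ℝ → ℝ be twice continuously differentiable and Δx > 0 with cell averages defined as in WENO3. Then the sub-stencil interpolant u⁽¹⁾ = (ū_i + ū_{i+1})/2 satisfies u⁽¹⁾ = u(x_{i+1/2}) + O(Δx²) as Δx → 0, where x_{i+1/2} = x_i + Δx/2. -/
/-!
The two adjacent cell averages combine into the average of `u` over the cell of width `2Δx`
centred at `x_{i+1/2}`. A centred average differs from the value at the centre by the average of
the first-order Taylor remainder, because the linear term integrates to zero over a symmetric
cell; as `u'` is Lipschitz near `x_i`, that remainder is `O(Δx²)` uniformly in the moving centre.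
-/

open MeasureTheory intervalIntegral Filter Asymptotics

open Set NNReal

theorem abs_sub_sub_deriv_mul_le_of_lipschitzOnWith {f f' : ℝ → ℝ} {s : Set ℝ} {K : ℝ≥0}
    {c x : ℝ} (hs : Convex ℝ s) (hf : ∀ y ∈ s, HasDerivWithinAt f (f' y) s y)
    (hf' : LipschitzOnWith K f' s) (hc : c ∈ s) (hx : x ∈ s) :
    |f x - f c - f' c * (x - c)| ≤ K * (x - c) ^ 2 := by
  have hsub : uIcc c x ⊆ s := hs.ordConnected.uIcc_subset hc hx
  have hderiv : ∀ y ∈ uIcc c x, HasDerivWithinAt (fun y => f y - f c - f' c * (y - c))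
      (f' y - f' c) (uIcc c x) y := fun y hy =>
    (((hf y (hsub hy)).mono hsub).sub_const (f c)).sub
      (((hasDerivWithinAt_id y _).sub_const c).const_mul (f' c)) |>.congr_deriv (by ring)
  have hbound : ∀ y ∈ uIcc c x, ‖f' y - f' c‖ ≤ K * |x - c| := fun y hy =>
    (hf'.dist_le_mul y (hsub hy) c hc).trans <| by
      gcongr; exact abs_sub_left_of_mem_uIcc hy
  have := (convex_uIcc c x).norm_image_sub_le_of_norm_hasDerivWithin_le hderiv hbound
      left_mem_uIcc right_mem_uIcc
  simp only [sub_self, mul_zero, sub_zero, Real.norm_eq_abs] at this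
  rwa [mul_assoc, abs_mul_abs_self, ← sq] at this

theorem abs_cellAvg_sub_le_of_lipschitzOnWith_deriv {u u' : ℝ → ℝ} {K : ℝ≥0} {c h : ℝ}
    (hh : 0 < h) (hu : ∀ x ∈ Icc (c - h / 2) (c + h / 2), HasDerivAt u (u' x) x)
    (hu' : LipschitzOnWith K u' (Icc (c - h / 2) (c + h / 2))) :
    |cellAvg u c h - u c| ≤ K * (h / 2) ^ 2 := by
  have hc : c ∈ Icc (c - h / 2) (c + h / 2) := ⟨by linarith, by linarith⟩
  have hle : c - h / 2 ≤ c + h / 2 := by linarith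
  set g : ℝ → ℝ := fun x => u x - u c - u' c * (x - c)
  have hg : ∀ x ∈ uIoc (c - h / 2) (c + h / 2), ‖g x‖ ≤ K * (h / 2) ^ 2 := by
    intro x hx
    rw [uIoc_of_le hle] at hx
    refine (abs_sub_sub_deriv_mul_le_of_lipschitzOnWith (convex_Icc _ _)
      (fun y hy => (hu y hy).hasDerivWithinAt) hu' hc (Ioc_subset_Icc_self hx)).trans ?_
    exact mul_le_mul_of_nonneg_left (sq_le_sq' (by linarith [hx.1]) (by linarith [hx.2])) K.2
  have hg_integral : ∫ x in (c - h / 2)..(c + h / 2), g x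
      = (∫ x in (c - h / 2)..(c + h / 2), u x) - h * u c := by
    have hcont : ContinuousOn u (uIcc (c - h / 2) (c + h / 2)) := by
      rw [uIcc_of_le hle]
      exact fun x hx => (hu x hx).continuousAt.continuousWithinAt
    simp only [g]
    rw [intervalIntegral.integral_sub (hcont.intervalIntegrable.sub intervalIntegrable_const)
        ((by fun_prop : Continuous fun x => u' c * (x - c)).intervalIntegrable _ _),
      intervalIntegral.integral_sub hcont.intervalIntegrable intervalIntegrable_const,
      intervalIntegral.integral_const_mul,
      integral_comp_sub_right (fun x => x)]
    simp
  have herr : cellAvg u c h - u c = (1 / h) * ∫ x in (c - h / 2)..(c + h / 2), g x := by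
    rw [hg_integral, cellAvg]
    field_simp
  rw [herr, abs_mul, abs_of_pos (one_div_pos.mpr hh), ← Real.norm_eq_abs]
  calc 1 / h * ‖∫ x in (c - h / 2)..(c + h / 2), g x‖
      ≤ 1 / h * (K * (h / 2) ^ 2 * |c + h / 2 - (c - h / 2)|) := by
        gcongr; exact norm_integral_le_of_norm_le_const hg
    _ = K * (h / 2) ^ 2 := by
        rw [show c + h / 2 - (c - h / 2) = h by ring, abs_of_pos hh]
        field_simp

theorem cellAvg_add_cellAvg_add_div_two {u : ℝ → ℝ} (hu : LocallyIntegrable u volume)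
    (c h : ℝ) : (cellAvg u c h + cellAvg u (c + h) h) / 2 = cellAvg u (c + h / 2) (2 * h) := by
  have hintegrable (a b : ℝ) : IntervalIntegrable u volume a b :=
    (hu.integrableOn_isCompact isCompact_uIcc).intervalIntegrable
  have hsplit := integral_add_adjacent_intervals (hintegrable (c - h / 2) (c + h / 2))
    (hintegrable (c + h / 2) (c + h + h / 2))
  simp only [cellAvg]
  rw [show c + h - h / 2 = c + h / 2 by ring, show c + h / 2 - 2 * h / 2 = c - h / 2 by ring,
    show c + h / 2 + 2 * h / 2 = c + h + h / 2 by ring, ← hsplit]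
  ring

theorem weno3_substencil1_second_order (u : ℝ → ℝ) (hu : ContDiff ℝ 2 u) (xi : ℝ) :
    (fun Δx : ℝ =>
        (cellAvg u xi Δx + cellAvg u (xi + Δx) Δx) / 2 - u (xi + Δx/2))
      =O[nhdsWithin 0 (Set.Ioi 0)] fun Δx : ℝ => Δx^2 := by
  have hderiv : ContDiff ℝ 1 (deriv u) := hu.deriv'
  obtain ⟨K, t, ht, hK⟩ := hderiv.contDiffAt.exists_lipschitzOnWith (x := xi)
  obtain ⟨ε, hε, hball⟩ := Metric.mem_nhds_iff.mp ht
  refine .of_bound K ?_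
  filter_upwards [Ioo_mem_nhdsGT (half_pos hε)] with Δx ⟨hΔ, hΔε⟩
  have hsub : Icc (xi + Δx / 2 - 2 * Δx / 2) (xi + Δx / 2 + 2 * Δx / 2) ⊆ Metric.ball xi ε :=
    fun x hx => by
      rw [Metric.mem_ball, Real.dist_eq, abs_lt]
      constructor <;> linarith [hx.1, hx.2]
  rw [cellAvg_add_cellAvg_add_div_two hu.continuous.locallyIntegrable, Real.norm_eq_abs,
    Real.norm_eq_abs, abs_of_nonneg (sq_nonneg Δx)]
  calc _ ≤ K * (2 * Δx / 2) ^ 2 := abs_cellAvg_sub_le_of_lipschitzOnWith_deriv (by positivity)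
        (fun x _ => (hu.differentiable (by norm_num) x).hasDerivAt) ((hK.mono hball).mono hsub)
    _ = K * Δx ^ 2 := by ring
end

section
/- Let u : ℝ → ℝ be twice continuously differentiable and Δx > 0 with cell averages as in WENO3. Then u⁽⁰⁾ = (−ū_{i−1} + 3ū_i)/2 satisfies u⁽⁰⁾ = u(x_{i+1/2}) + O(Δx²) as Δx → 0. -/
open MeasureTheory intervalIntegral Filter Asymptotics

theorem weno3_substencil0_second_order (u : ℝ → ℝ) (hu : ContDiff ℝ 2 u) (xi : ℝ) :
    (fun Δx : ℝ =>
        (-(cellAvg u (xi - Δx) Δx) + 3 * cellAvg u xi Δx) / 2 - u (xi + Δx/2))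
      =O[nhdsWithin 0 (Set.Ioi 0)] fun Δx : ℝ => Δx^2 := by
  have hu1 : Differentiable ℝ u := hu.differentiable (by norm_num)
  have hcu : Continuous u := hu1.continuous
  have hdu : ContDiff ℝ 1 (deriv u) :=
    ((contDiff_succ_iff_deriv (n := 1)).mp (by exact_mod_cast hu)).2.2
  have hdu1 : Differentiable ℝ (deriv u) := hdu.differentiable (by norm_num)
  have hcdu : Continuous (deriv u) := hdu1.continuous
  have hcddu : Continuous (deriv (deriv u)) :=
    contDiff_zero.mp ((contDiff_succ_iff_deriv (n := 0)).mp (by exact_mod_cast hdu)).2.2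
  set s : Set ℝ := Set.Icc (xi - 2) (xi + 2) with hs_def
  obtain ⟨C0, hC0⟩ : ∃ C0, ∀ x ∈ s, ‖deriv (deriv u) x‖ ≤ C0 :=
    isCompact_Icc.exists_bound_of_continuousOn hcddu.continuousOn
  set C : ℝ := max C0 0 with hC_def
  have hCnn : 0 ≤ C := le_max_right _ _
  have hC : ∀ x ∈ s, ‖deriv (deriv u) x‖ ≤ C := fun x hx => (hC0 x hx).trans (le_max_left _ _)
  have hconv : Convex ℝ s := convex_Icc _ _
  have hLip : ∀ x ∈ s, ∀ y ∈ s, ‖deriv u y - deriv u x‖ ≤ C * ‖y - x‖ := fun x hx y hy =>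
    hconv.norm_image_sub_le_of_norm_deriv_le (fun z _ => hdu1 z) hC hx hy
  have hr : ∀ c ∈ s, ∀ x ∈ s, ‖u x - u c - deriv u c * (x - c)‖ ≤ C * |x - c| * |x - c| := by
    intro c hc x hx
    have hsub : Set.uIcc c x ⊆ s := hconv.ordConnected.uIcc_subset hc hx
    have heq : u x - u c - deriv u c * (x - c)
        = ∫ t in c..x, (deriv u t - deriv u c) := by
      rw [intervalIntegral.integral_sub (hcdu.continuousOn.intervalIntegrable)
        intervalIntegrable_const,
        intervalIntegral.integral_deriv_eq_sub (fun t _ => hu1 t)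
          (hcdu.continuousOn.intervalIntegrable),
        intervalIntegral.integral_const, smul_eq_mul]
      ring
    rw [heq]
    refine intervalIntegral.norm_integral_le_of_norm_le_const ?_
    intro t ht
    have ht' : t ∈ Set.uIcc c x := Set.Ioc_subset_Icc_self ht
    have hts : t ∈ s := hsub ht'
    have h1 : ‖deriv u t - deriv u c‖ ≤ C * ‖t - c‖ := hLip c hc t hts
    have h2 : |t - c| ≤ |x - c| := by
      rcases le_total c x with hcx | hcx
      · rw [Set.uIcc_of_le hcx] at ht'
        rw [abs_of_nonneg (by linarith [ht'.1]), abs_of_nonneg (by linarith [hcx])]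
        linarith [ht'.2]
      · rw [Set.uIcc_of_ge hcx] at ht'
        rw [abs_of_nonpos (by linarith [ht'.2]), abs_of_nonpos (by linarith [hcx])]
        linarith [ht'.1]
    calc ‖deriv u t - deriv u c‖ ≤ C * ‖t - c‖ := h1
      _ ≤ C * |x - c| := mul_le_mul_of_nonneg_left h2 hCnn
  rw [isBigO_iff]
  refine ⟨8 * C, ?_⟩
  have hmem : Set.Ioo (0:ℝ) 1 ∈ nhdsWithin (0:ℝ) (Set.Ioi 0) :=
    Ioo_mem_nhdsGT_of_mem (by constructor <;> norm_num)
  filter_upwards [hmem] with h hh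
  obtain ⟨h0, h1⟩ := hh
  set c : ℝ := xi + h/2 with hc_def
  set d : ℝ := deriv u c with hd_def
  set v : ℝ → ℝ := fun x => u x - u c - d * (x - c) with hv_def
  have hcv : Continuous v := by
    simp only [hv_def]; fun_prop
  have hsplit : ∀ a b : ℝ, (∫ x in a..b, u x)
      = (∫ x in a..b, v x) + (u c * (b - a) + d * ((b-c)^2 - (a-c)^2)/2) := by
    intro a b
    have hvint : IntervalIntegrable v volume a b := hcv.continuousOn.intervalIntegrable
    have hlint : IntervalIntegrable (fun x : ℝ => u c + d * (x - c)) volume a b :=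
      (Continuous.continuousOn (by fun_prop)).intervalIntegrable
    have e1 : ∫ x in a..b, u x = ∫ x in a..b, (v x + (u c + d * (x - c))) := by
      refine intervalIntegral.integral_congr fun x _ => ?_
      simp only [hv_def]; ring
    rw [e1, intervalIntegral.integral_add hvint hlint]
    congr 1
    have hxint : IntervalIntegrable (fun x : ℝ => x) volume a b :=
      (Continuous.continuousOn (by fun_prop)).intervalIntegrable
    have hdint : IntervalIntegrable (fun x : ℝ => d * (x - c)) volume a b :=
      (Continuous.continuousOn (by fun_prop)).intervalIntegrable
    rw [intervalIntegral.integral_add intervalIntegrable_const hdint,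
      intervalIntegral.integral_const_mul,
      intervalIntegral.integral_sub hxint intervalIntegrable_const,
      integral_id, intervalIntegral.integral_const, intervalIntegral.integral_const,
      smul_eq_mul, smul_eq_mul]
    ring
  set R1 : ℝ := ∫ x in (xi - h - h/2)..(xi - h + h/2), v x with hR1_def
  set R2 : ℝ := ∫ x in (xi - h/2)..(xi + h/2), v x with hR2_def
  have hne : h ≠ 0 := ne_of_gt h0
  have key : (-(cellAvg u (xi - h) h) + 3 * cellAvg u xi h)/2 - u (xi + h/2)
      = (3 * R2 - R1) / (2*h) := by
    unfold cellAvg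
    rw [hsplit (xi - h - h/2) (xi - h + h/2), hsplit (xi - h/2) (xi + h/2)]
    rw [← hR1_def, ← hR2_def, ← hc_def]
    field_simp
    ring
  rw [key]
  have hcells : ∀ x : ℝ, xi - h - h/2 ≤ x → x ≤ xi + h/2 → x ∈ s ∧ |x - c| ≤ 2*h := by
    intro x hx1 hx2
    refine ⟨?_, ?_⟩
    · simp only [hs_def, Set.mem_Icc]; constructor <;> linarith
    · rw [abs_le]; constructor <;> simp only [hc_def] <;> linarith
  have hcs : c ∈ s := by simp only [hs_def, hc_def, Set.mem_Icc]; constructor <;> linarith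
  have hvbound : ∀ x : ℝ, xi - h - h/2 ≤ x → x ≤ xi + h/2 → ‖v x‖ ≤ C * (2*h) * (2*h) := by
    intro x hx1 hx2
    obtain ⟨hxs, hxc⟩ := hcells x hx1 hx2
    refine (hr c hcs x hxs).trans ?_
    have habs : (0:ℝ) ≤ |x - c| := abs_nonneg _
    exact mul_le_mul (mul_le_mul_of_nonneg_left hxc hCnn) hxc habs (by positivity)
  have hR1b : ‖R1‖ ≤ C * (2*h) * (2*h) * h := by
    have hb := intervalIntegral.norm_integral_le_of_norm_le_const (C := C * (2*h) * (2*h))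
      (a := xi - h - h/2) (b := xi - h + h/2) (f := v) ?_
    · refine hb.trans ?_
      have he : |xi - h + h/2 - (xi - h - h/2)| = h := by
        rw [abs_of_nonneg (by linarith)]; ring
      rw [he]
    · intro t ht
      have ht' : t ∈ Set.uIcc (xi - h - h/2) (xi - h + h/2) := Set.Ioc_subset_Icc_self ht
      rw [Set.uIcc_of_le (by linarith)] at ht'
      exact hvbound t ht'.1 (by linarith [ht'.2])
  have hR2b : ‖R2‖ ≤ C * (2*h) * (2*h) * h := by
    have hb := intervalIntegral.norm_integral_le_of_norm_le_const (C := C * (2*h) * (2*h))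
      (a := xi - h/2) (b := xi + h/2) (f := v) ?_
    · refine hb.trans ?_
      have he : |xi + h/2 - (xi - h/2)| = h := by
        rw [abs_of_nonneg (by linarith)]; ring
      rw [he]
    · intro t ht
      have ht' : t ∈ Set.uIcc (xi - h/2) (xi + h/2) := Set.Ioc_subset_Icc_self ht
      rw [Set.uIcc_of_le (by linarith)] at ht'
      exact hvbound t (by linarith [ht'.1]) ht'.2
  have hbound : ‖3 * R2 - R1‖ ≤ 16 * C * h^2 * h := by
    calc ‖3 * R2 - R1‖ ≤ ‖3 * R2‖ + ‖R1‖ := norm_sub_le _ _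
      _ = 3 * ‖R2‖ + ‖R1‖ := by rw [norm_mul]; norm_num
      _ ≤ 3 * (C * (2*h) * (2*h) * h) + C * (2*h) * (2*h) * h :=
          add_le_add (mul_le_mul_of_nonneg_left hR2b (by norm_num)) hR1b
      _ = 16 * C * h^2 * h := by ring
  rw [norm_div]
  have h2h : ‖(2*h : ℝ)‖ = 2*h := by
    rw [Real.norm_eq_abs, abs_of_pos (by linarith)]
  rw [h2h, div_le_iff₀ (by linarith : (0:ℝ) < 2*h)]
  have hn2 : ‖h^2‖ = h^2 := by rw [Real.norm_eq_abs, abs_of_pos (by positivity)]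
  rw [hn2]
  refine hbound.trans (le_of_eq (by ring))
end
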